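/- Let ℓ ≥ 2. There is a constant n₀ (depending only on ℓ) with the following property. Let A be an m-rowed simple 3-matrix containing no member of 𝒯_ℓ(3) \ 𝒯_ℓ(2) as a configuration, and let S be a set of rows of A such that: the restriction A|_S of A to the rows of S contains as a configuration the |S|×(|S|+1) matrix [𝟎 | I_{|S|}] consisting of a column of 0's followed by the |S|×|S| identity matrix I_{|S|}(1,0); and for every pair of rows i, j ∈ S, no column of A has entry 1 in both row i and row j. If |S| > n₀, then there exists a row i ∈ S such that: no two columns of A agree on all rows other than i and have entries 1 and 2 in row i, and no two columns of A agree on all rows other than i and have entries 0 and 2 in row i. -/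

import Mathlib

/-!
Suppose every row `i ∈ S` had two columns `d i`, `c i` differing only in row `i`, with
`A i (c i) = 2` and `A i (d i) ∈ {0, 1}`. Colour each pair of rows `i < j` of `S` by
`(A i (c j), A j (c i))`; by Ramsey's theorem some `2ℓ` rows get one colour `(u, v)`, so on
these rows the columns `c` carry the pattern with `v` below, `2` on and `u` above the diagonal.
Since no column has two 1's in `S`, neither `u` nor `v` is 1. If one of them is 0 this pattern
contains `I_ℓ(2,0)` or, possibly after reversing the order of the rows, `T_ℓ(0,2)`. If
`u = v = 2`, the columns `d` see the same off-diagonal 2's, and `ℓ` of the rows share a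
diagonal value `e < 2`, giving `I_ℓ(e,2)`. Each of these lies in `𝒯_ℓ(3) \ 𝒯_ℓ(2)`.
-/

/-- A matrix with natural number entries, of size `k × p`. -/
abbrev MatN (k p : ℕ) := Matrix (Fin k) (Fin p) ℕ

/-- A matrix bundled with its dimensions. -/
structure CMat where
  rows : ℕ
  cols : ℕ
  mat : MatN rows cols

/-- A matrix is simple if no two of its columns are equal. -/
def SimpleM {m n : ℕ} (A : MatN m n) : Prop :=
  ∀ j₁ j₂ : Fin n, (∀ i, A i j₁ = A i j₂) → j₁ = j₂

/-- An `r`-matrix: all entries lie in `{0, 1, …, r-1}`. -/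
def RMat (r : ℕ) {m n : ℕ} (A : MatN m n) : Prop := ∀ i j, A i j < r

/-- `F` is a configuration of `A` (written `F ≺ A`): some submatrix of `A` is a row
and column permutation of `F`; equivalently there are injections of the rows and
columns of `F` into those of `A` realizing the entries of `F`. -/
def IsConfig {k p m n : ℕ} (F : MatN k p) (A : MatN m n) : Prop :=
  ∃ f : Fin k → Fin m, ∃ g : Fin p → Fin n,
    Function.Injective f ∧ Function.Injective g ∧ ∀ i j, A (f i) (g j) = F i j

/-- `A` avoids every matrix of the family `𝓕` as a configuration. -/
def AvoidsFam {m n : ℕ} (A : MatN m n) (𝓕 : Set CMat) : Prop :=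
  ∀ F ∈ 𝓕, ¬ IsConfig F.mat A

/-- `forb m r 𝓕`: the maximum number of columns of an `m`-rowed simple `r`-matrix
having no member of `𝓕` as a configuration. -/
noncomputable def forb (m r : ℕ) (𝓕 : Set CMat) : ℕ :=
  sSup { n : ℕ | ∃ A : MatN m n, RMat r A ∧ SimpleM A ∧ AvoidsFam A 𝓕 }

/-- `forbmax m r 𝓕`: the maximum of `forb m' r 𝓕` over `m' ≤ m`. -/
noncomputable def forbmax (m r : ℕ) (𝓕 : Set CMat) : ℕ :=
  sSup { x : ℕ | ∃ m' ≤ m, x = forb m' r 𝓕 }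

/-- The number of 1's in column `j` of `A` (the column sum). -/
def colSum {m n : ℕ} (A : MatN m n) (j : Fin n) : ℕ :=
  (Finset.univ.filter (fun i => A i j = 1)).card

/-- `forbK k m r 𝓕`: as `forb`, but restricted to matrices all of whose columns
have exactly `k` entries equal to 1. -/
noncomputable def forbK (k m r : ℕ) (𝓕 : Set CMat) : ℕ :=
  sSup { n : ℕ | ∃ A : MatN m n, RMat r A ∧ SimpleM A ∧ (∀ j, colSum A j = k) ∧
    AvoidsFam A 𝓕 }

/-- `forbmaxK k m r 𝓕`: the maximum of `forbK k m' r 𝓕` over `m' ≤ m`. -/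
noncomputable def forbmaxK (k m r : ℕ) (𝓕 : Set CMat) : ℕ :=
  sSup { x : ℕ | ∃ m' ≤ m, x = forbK k m' r 𝓕 }

/-- `Imat ℓ a b`: the `ℓ × ℓ` matrix with `a` on the diagonal and `b` off the diagonal. -/
def Imat (ℓ a b : ℕ) : MatN ℓ ℓ := fun i j => if i = j then a else b

/-- `Tmat ℓ a b`: the `ℓ × ℓ` matrix with `a` below the diagonal and `b` on or above it. -/
def Tmat (ℓ a b : ℕ) : MatN ℓ ℓ := fun i j => if (j : ℕ) < (i : ℕ) then a else b

/-- `Tmat3 ℓ a b c`: the `ℓ × ℓ` matrix with `a` below, `b` on, and `c` above the diagonal. -/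
def Tmat3 (ℓ a b c : ℕ) : MatN ℓ ℓ :=
  fun i j => if (j : ℕ) < (i : ℕ) then a else if i = j then b else c

/-- The family `𝒯_ℓ(r)` of all `I_ℓ(a,b)` and `T_ℓ(a,b)` with `a,b ∈ {0,…,r-1}`, `a ≠ b`. -/
def TFam (ℓ r : ℕ) : Set CMat :=
  { M | ∃ a b : ℕ, a < r ∧ b < r ∧ a ≠ b ∧
      (M = ⟨ℓ, ℓ, Imat ℓ a b⟩ ∨ M = ⟨ℓ, ℓ, Tmat ℓ a b⟩) }

/-- `t·F`: the concatenation of `t` copies of `F` side by side. -/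
def tcopies {k p : ℕ} (t : ℕ) (F : MatN k p) : MatN k (t * p) :=
  fun i j => F i ⟨(j : ℕ) % p, Nat.mod_lt _ (by
    rcases Nat.eq_zero_or_pos p with h | h
    · exact absurd j.isLt (by simp [h])
    · exact h)⟩

/-- `0×1×F`: `F` with an extra row of 0's and an extra row of 1's appended. -/
def zeroOneTop {k p : ℕ} (F : MatN k p) : MatN (k + 2) p :=
  fun i j => if h : (i : ℕ) < k then F ⟨i, h⟩ j else if (i : ℕ) = k then 0 else 1

/-- `F_{a,b,c,d}`: the `(a+b+c+d) × 2` matrix with `a` rows `[1 1]`, `b` rows `[1 0]`,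
`c` rows `[0 1]` and `d` rows `[0 0]`. -/
def Fabcd (a b c d : ℕ) : MatN (a + b + c + d) 2 :=
  fun i j =>
    if (i : ℕ) < a then 1
    else if (i : ℕ) < a + b then (if (j : ℕ) = 0 then 1 else 0)
    else if (i : ℕ) < a + b + c then (if (j : ℕ) = 0 then 0 else 1)
    else 0

/-- The `s × (s+1)` matrix `[𝟎 | I_s]`: a column of 0's followed by the `s×s`
identity matrix `I_s(1,0)`. -/
def zeroId (s : ℕ) : MatN s (s + 1) :=
  fun i j => if (j : ℕ) = 0 then 0 else if (j : ℕ) = (i : ℕ) + 1 then 1 else 0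

open Function Finset

theorem exists_orderEmbedding_forall_eq {κ : Type*} [Fintype κ] [Nonempty κ] {M N : ℕ} (h : Fintype.card κ * M ≤ N)
    (χ : Fin N → κ) : ∃ y : Fin M ↪o Fin N, ∃ c, ∀ a, χ (y a) = c := by
  classical
  obtain ⟨c, hc⟩ := Fintype.exists_le_card_fiber_of_mul_le_card χ (by simpa using h)
  exact ⟨(univ.filter fun x => χ x = c).orderEmbOfCardLe hc, c,
    fun a => (mem_filter.1 (orderEmbOfCardLe_mem _ hc a)).2⟩

theorem exists_orderEmbedding_color_eq_of_lt (κ : Type*) [Fintype κ] [Nonempty κ] (M : ℕ) :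
    ∃ N, ∀ χ : Fin N → Fin N → κ, ∃ y : Fin M ↪o Fin N, ∃ col : Fin M → κ,
      ∀ a b, a < b → χ (y a) (y b) = col a := by
  induction M with
  | zero => exact ⟨0, fun _ => ⟨OrderEmbedding.ofIsEmpty, finZeroElim, fun a => a.elim0⟩⟩
  | succ M ih =>
    obtain ⟨N, hN⟩ := ih
    refine ⟨Fintype.card κ * N + 1, fun χ => ?_⟩
    obtain ⟨z, c, hz⟩ := exists_orderEmbedding_forall_eq le_rfl fun t => χ 0 t.succ
    obtain ⟨y, col, hy⟩ := hN fun s t => χ (z s).succ (z t).succ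
    refine ⟨.ofStrictMono (Fin.cons 0 fun a => (z (y a)).succ)
      (Fin.strictMono_cons.2 ⟨fun _ => Fin.succ_pos _,
        Fin.strictMono_succ.comp (z.strictMono.comp y.strictMono)⟩), Fin.cons c col, ?_⟩
    intro a b hab
    cases a using Fin.cases with
    | zero =>
      cases b using Fin.cases with
      | zero => exact absurd hab (lt_irrefl 0)
      | succ b => simpa using hz (y b)
    | succ a =>
      cases b using Fin.cases with
      | zero => exact absurd hab (Fin.not_lt_zero _)
      | succ b => simpa using hy a b (Fin.succ_lt_succ_iff.1 hab)

theorem exists_orderEmbedding_monochromatic (κ : Type*) [Fintype κ] [Nonempty κ] (M : ℕ) :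
    ∃ N, ∀ (α : Type*) [LinearOrder α] [Fintype α], N ≤ Fintype.card α →
      ∀ χ : α → α → κ, ∃ y : Fin M ↪o α, ∃ c, ∀ a b, a < b → χ (y a) (y b) = c := by
  obtain ⟨N, hN⟩ := exists_orderEmbedding_color_eq_of_lt κ (Fintype.card κ * M)
  refine ⟨N, fun α _ _ hα χ => ?_⟩
  let e : Fin N ↪o α :=
    (Fin.castLEOrderEmb hα).trans (Fintype.orderIsoFinOfCardEq α rfl).toOrderEmbedding
  obtain ⟨y, col, hy⟩ := hN fun s t => χ (e s) (e t)
  obtain ⟨z, c, hz⟩ := exists_orderEmbedding_forall_eq le_rfl col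
  exact ⟨z.trans (y.trans e), c, fun a b hab => (hy _ _ (z.strictMono hab)).trans (hz a)⟩

section Patterns

variable {m n : ℕ} (A : MatN m n)

theorem isConfig_of_injective_rows {k p : ℕ} {F : MatN k p} (hF : SimpleM F)
    {f : Fin k → Fin m} (hf : Injective f) {g : Fin p → Fin n}
    (h : ∀ i j, A (f i) (g j) = F i j) : IsConfig F A :=
  ⟨f, g, hf, fun j j' hjj' => hF j j' fun i => by rw [← h, ← h, hjj'], h⟩

theorem IsConfig.reindex {k p : ℕ} {F : MatN k p} (hFA : IsConfig F A)
    (σ : Equiv.Perm (Fin k)) (τ : Equiv.Perm (Fin p)) :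
    IsConfig (fun i j => F (σ i) (τ j)) A := by
  obtain ⟨f, g, hf, hg, h⟩ := hFA
  exact ⟨f ∘ σ, g ∘ τ, hf.comp σ.injective, hg.comp τ.injective, fun i j => h _ _⟩

end Patterns

section Tmat3

variable {ℓ a b c : ℕ}

theorem Tmat3_eq_Imat : Tmat3 ℓ b a b = Imat ℓ a b := by
  ext i j
  simp only [Tmat3, Imat]
  split_ifs <;> first | rfl | omega

theorem Tmat3_eq_Tmat : Tmat3 ℓ a b b = Tmat ℓ a b := by
  ext i j
  simp only [Tmat3, Tmat]
  split_ifs <;> rfl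

theorem Tmat3_rev :
    (fun i j => Tmat3 ℓ a b c (Fin.revPerm i) (Fin.revPerm j)) = Tmat3 ℓ c b a := by
  ext i j
  simp only [Tmat3, Fin.revPerm_apply, ← Fin.lt_def, Fin.rev_lt_rev, Fin.rev_inj]
  split_ifs <;> first | rfl | omega

theorem Tmat3_apply_orderEmbedding {k : ℕ} (e : Fin ℓ ↪o Fin k) (i j : Fin ℓ) :
    Tmat3 k a b c (e i) (e j) = Tmat3 ℓ a b c i j := by
  simp only [Tmat3, ← Fin.lt_def, e.lt_iff_lt, e.eq_iff_eq]

theorem eq_Tmat3_of_forall_lt {k : ℕ} {M : MatN k k} (hdiag : ∀ i, M i i = b)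
    (hlt : ∀ i j, i < j → M i j = c ∧ M j i = a) : M = Tmat3 k a b c := by
  ext i j
  simp only [Tmat3, ← Fin.lt_def]
  split_ifs with hji hij
  · exact (hlt j i hji).2
  · rw [hij, hdiag]
  · exact (hlt i j (lt_of_le_of_ne (not_lt.1 hji) hij)).1

theorem simpleM_Tmat3 (h : a ≠ b ∨ c ≠ b) : SimpleM (Tmat3 ℓ a b c) := by
  intro j j' hjj'
  have hj := hjj' j
  have hj' := hjj' j'
  simp only [Tmat3, lt_irrefl, if_false, if_true, ← Fin.lt_def] at hj hj'
  by_contra hne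
  rcases lt_or_gt_of_ne hne with hlt | hlt
  · simp [hlt, hlt.ne, not_lt_of_gt hlt] at hj hj'
    omega
  · simp [hlt, hlt.ne, not_lt_of_gt hlt] at hj hj'
    omega

end Tmat3

theorem lt_of_mem_TFam {ℓ r : ℕ} {M : CMat} (hM : M ∈ TFam ℓ r)
    (i : Fin M.rows) (j : Fin M.cols) : M.mat i j < r := by
  obtain ⟨a, b, ha, hb, -, rfl | rfl⟩ := hM
  · simp only [Imat]; split_ifs <;> assumption
  · simp only [Tmat]; split_ifs <;> assumption

theorem not_avoidsFam_of_isConfig {m n ℓ : ℕ} {A : MatN m n} {F : MatN ℓ ℓ}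
    (hF : (⟨ℓ, ℓ, F⟩ : CMat) ∈ TFam ℓ 3) {i j : Fin ℓ} (h2 : F i j = 2)
    (hFA : IsConfig F A) :
    ¬ AvoidsFam A (TFam ℓ 3 \ TFam ℓ 2) :=
  fun hA => hA _ ⟨hF, fun h => by simpa [h2] using lt_of_mem_TFam h i j⟩ hFA

section ForbiddenPatterns

variable {m n ℓ : ℕ} {A : MatN m n}

theorem not_avoidsFam_of_offDiag_eq_two (hℓ : 2 ≤ ℓ) {f : Fin (2 * ℓ) → Fin m}
    (hf : Injective f) {d : Fin (2 * ℓ) → Fin n} (hdiag : ∀ i, A (f i) (d i) < 2)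
    (hoff : ∀ i j, i ≠ j → A (f i) (d j) = 2) : ¬ AvoidsFam A (TFam ℓ 3 \ TFam ℓ 2) := by
  obtain ⟨y, e, hy⟩ := exists_orderEmbedding_forall_eq (M := ℓ) (by simp [two_mul])
    fun i => (⟨A (f i) (d i), hdiag i⟩ : Fin 2)
  have he : ∀ i, A (f (y i)) (d (y i)) = e := fun i => congrArg Fin.val (hy i)
  have hpattern : ∀ i j, A (f (y i)) (d (y j)) = Imat ℓ e 2 i j := by
    intro i j
    by_cases hij : i = j
    · simp [Imat, hij, he]
    · simp [Imat, hij, hoff _ _ (y.injective.ne hij)]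
  refine not_avoidsFam_of_isConfig ⟨e, 2, by omega, by omega, by omega, Or.inl rfl⟩
    (i := ⟨0, by omega⟩) (j := ⟨1, by omega⟩) (by simp [Imat]) ?_
  refine isConfig_of_injective_rows A ?_ (hf.comp y.injective) hpattern
  rw [← Tmat3_eq_Imat]
  exact simpleM_Tmat3 (Or.inl (by omega))

theorem not_avoidsFam_of_Tmat3 (hℓ : 1 ≤ ℓ) {k : ℕ} (hk : ℓ ≤ k) {f : Fin k → Fin m}
    (hf : Injective f) {g : Fin k → Fin n} {u v : ℕ} (hu : u = 0 ∨ u = 2) (hv : v = 0 ∨ v = 2)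
    (huv : u ≠ 2 ∨ v ≠ 2) (hg : ∀ i j, A (f i) (g j) = Tmat3 k v 2 u i j) :
    ¬ AvoidsFam A (TFam ℓ 3 \ TFam ℓ 2) := by
  have hcfg : IsConfig (Tmat3 ℓ v 2 u) A :=
    isConfig_of_injective_rows A (simpleM_Tmat3 huv.symm)
      (hf.comp (Fin.castLEOrderEmb hk).injective)
      fun i j => (hg _ _).trans (Tmat3_apply_orderEmbedding _ i j)
  rcases hv with rfl | rfl
  · rcases hu with rfl | rfl
    · rw [Tmat3_eq_Imat] at hcfg
      exact not_avoidsFam_of_isConfig ⟨2, 0, by omega, by omega, by omega, Or.inl rfl⟩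
        (i := ⟨0, hℓ⟩) (j := ⟨0, hℓ⟩) (by simp [Imat]) hcfg
    · rw [Tmat3_eq_Tmat] at hcfg
      exact not_avoidsFam_of_isConfig ⟨0, 2, by omega, by omega, by omega, Or.inr rfl⟩
        (i := ⟨0, hℓ⟩) (j := ⟨0, hℓ⟩) (by simp [Tmat]) hcfg
  · rcases hu with rfl | rfl
    · have := hcfg.reindex A Fin.revPerm Fin.revPerm
      rw [Tmat3_rev, Tmat3_eq_Tmat] at this
      exact not_avoidsFam_of_isConfig ⟨0, 2, by omega, by omega, by omega, Or.inr rfl⟩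
        (i := ⟨0, hℓ⟩) (j := ⟨0, hℓ⟩) (by simp [Tmat]) this
    · simp at huv

theorem not_avoidsFam_of_twoPartners (hℓ : 2 ≤ ℓ) {f : Fin (2 * ℓ) → Fin m} (hf : Injective f)
    {c d : Fin (2 * ℓ) → Fin n} {u v : ℕ} (hu : u < 3) (hv : v < 3)
    (hones : ∀ i j, i ≠ j → ∀ col, ¬ (A (f i) col = 1 ∧ A (f j) col = 1))
    (hc : ∀ i j, A (f i) (c j) = Tmat3 (2 * ℓ) v 2 u i j) (hd : ∀ i, A (f i) (d i) < 2)
    (hdc : ∀ i j, i ≠ j → A (f i) (d j) = A (f i) (c j)) :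
    ¬ AvoidsFam A (TFam ℓ 3 \ TFam ℓ 2) := by
  let i₀ : Fin (2 * ℓ) := ⟨0, by omega⟩
  let i₁ : Fin (2 * ℓ) := ⟨1, by omega⟩
  let i₂ : Fin (2 * ℓ) := ⟨2, by omega⟩
  have hu1 : u ≠ 1 := fun h => hones i₀ i₁ (by simp [i₀, i₁]) (c i₂)
    ⟨by rw [hc, ← h]; simp [Tmat3, i₀, i₂], by rw [hc, ← h]; simp [Tmat3, i₁, i₂]⟩
  have hv1 : v ≠ 1 := fun h => hones i₁ i₂ (by simp [i₁, i₂]) (c i₀)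
    ⟨by rw [hc, ← h]; simp [Tmat3, i₀, i₁], by rw [hc, ← h]; simp [Tmat3, i₀, i₂]⟩
  by_cases h22 : u = 2 ∧ v = 2
  · refine not_avoidsFam_of_offDiag_eq_two hℓ hf hd fun i j hij => ?_
    rw [hdc i j hij, hc]
    simp only [Tmat3, hij, if_false]
    split_ifs <;> omega
  · exact not_avoidsFam_of_Tmat3 (by omega) (by omega) hf (by omega) (by omega) (by omega) hc

end ForbiddenPatterns

/-- For `ℓ ≥ 2` there is `n₀` such that: if `A` is an `m`-rowed simple
3-matrix avoiding `𝒯_ℓ(3) \ 𝒯_ℓ(2)`, and `S` is a set of rows of `A` such that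
`[𝟎 | I_{|S|}] ≺ A|_S` and no column of `A` has a 1 in two rows of `S`, and
`|S| > n₀`, then some row `i ∈ S` is such that no two columns of `A` agree outside
row `i` with entries `1, 2` in row `i`, and no two columns agree outside row `i`
with entries `0, 2` in row `i`. -/
theorem stmt18 (ℓ : ℕ) (hℓ : 2 ≤ ℓ) :
    ∃ n₀ : ℕ, ∀ (m n : ℕ) (A : MatN m n), RMat 3 A → SimpleM A →
      AvoidsFam A (TFam ℓ 3 \ TFam ℓ 2) →
      ∀ S : Finset (Fin m),
        (∃ (f : Fin S.card → Fin m) (g : Fin (S.card + 1) → Fin n),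
          Function.Injective f ∧ Function.Injective g ∧ (∀ a, f a ∈ S) ∧
          ∀ a b, A (f a) (g b) = zeroId S.card a b) →
        (∀ i ∈ S, ∀ j ∈ S, i ≠ j → ∀ c : Fin n, ¬ (A i c = 1 ∧ A j c = 1)) →
        n₀ < S.card →
        ∃ i ∈ S,
          (¬ ∃ j₁ j₂ : Fin n, (∀ i' : Fin m, i' ≠ i → A i' j₁ = A i' j₂) ∧
            A i j₁ = 1 ∧ A i j₂ = 2) ∧
          (¬ ∃ j₁ j₂ : Fin n, (∀ i' : Fin m, i' ≠ i → A i' j₁ = A i' j₂) ∧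
            A i j₁ = 0 ∧ A i j₂ = 2) := by
  obtain ⟨N, hN⟩ := exists_orderEmbedding_monochromatic (Fin 3 × Fin 3) (2 * ℓ)
  refine ⟨N, fun m n A hA3 _ hA S _ hS1 hSN => ?_⟩
  by_contra hcon
  have hpartner : ∀ i : S, ∃ d c : Fin n,
      (∀ i' ≠ (i : Fin m), A i' d = A i' c) ∧ A i d < 2 ∧ A i c = 2 := by
    intro i
    by_contra h
    exact hcon ⟨i, i.2, fun ⟨d, c, hdc, hd, hc⟩ => h ⟨d, c, hdc, by omega, hc⟩,
      fun ⟨d, c, hdc, hd, hc⟩ => h ⟨d, c, hdc, by omega, hc⟩⟩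
  choose d c hdc hd hc using hpartner
  obtain ⟨y, ⟨u, v⟩, hy⟩ := hN S (by simpa using hSN.le)
    fun s t => (⟨A s (c t), hA3 _ _⟩, ⟨A t (c s), hA3 _ _⟩)
  have hf : Injective fun a => (y a : Fin m) := Subtype.val_injective.comp y.injective
  have hpattern := eq_Tmat3_of_forall_lt (M := fun i j => A (y i) (c (y j)))
    (fun i => hc (y i)) fun i j hij =>
      ⟨congrArg (·.1.val) (hy i j hij), congrArg (·.2.val) (hy i j hij)⟩
  refine not_avoidsFam_of_twoPartners hℓ hf u.isLt v.isLt
    (fun i j hij => hS1 _ (y i).2 _ (y j).2 (hf.ne hij)) (c := c ∘ y) (d := d ∘ y)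
    (fun i j => congrFun (congrFun hpattern i) j) (fun _ => hd _)
    (fun i j hij => hdc _ _ (hf.ne hij)) hA
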